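/- arXiv:2303.02733 — 5 statements merged into one kernel-verified Lean document; each statement's English description precedes it below -/
import Mathlib

section
/- Let I be a finite index set and let M₁, …, M_N : I → ℝ be binary masks (each Mₙ(i) ∈ {0,1}), with spatial gradient scaling G = Σₙ Mₙ (pointwise sum). Let φ : ℝ^{T+1} → ℝ be a linear map and let f be the associated elementwise linear optimizer, f(g⁽ᵀ⁾, …, g⁽⁰⁾)(i) = φ(g⁽ᵀ⁾(i), …, g⁽⁰⁾(i)). Then for any gradient history g⁽⁰⁾, …, g⁽ᵀ⁾ : I → ℝ, Σₙ Mₙ ⊙ f(Mₙ ⊙ g⁽ᵀ⁾, …, Mₙ ⊙ g⁽⁰⁾) = f(G ⊙ g⁽ᵀ⁾, …, G ⊙ g⁽⁰⁾), where ⊙ denotes pointwise multiplication of functions I → ℝ. -/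
open Finset

theorem isIdempotentElem_of_eq_zero_or_eq_one {R : Type*} [MulZeroOneClass R] {m : R}
    (hm : m = 0 ∨ m = 1) : IsIdempotentElem m := by
  rcases hm with rfl | rfl
  exacts [IsIdempotentElem.zero, IsIdempotentElem.one]

namespace LinearMap

variable {R V : Type*} [CommSemiring R] [AddCommMonoid V] [Module R V]

theorem mul_map_smul_of_isIdempotentElem (φ : V →ₗ[R] R) {m : R} (hm : IsIdempotentElem m)
    (x : V) : m * φ (m • x) = m * φ x := by
  rw [map_smul, smul_eq_mul, ← mul_assoc, hm.eq]

theorem sum_mul_map_smul_of_isIdempotentElem {ι : Type*} (s : Finset ι) (φ : V →ₗ[R] R)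
    {m : ι → R} (hm : ∀ n ∈ s, IsIdempotentElem (m n)) (x : V) :
    ∑ n ∈ s, m n * φ (m n • x) = φ ((∑ n ∈ s, m n) • x) := by
  rw [map_smul, smul_eq_mul, sum_mul]
  exact sum_congr rfl fun n hn => φ.mul_map_smul_of_isIdempotentElem (hm n hn) x

end LinearMap

theorem sgs_masked_optimizer_merge_general
    {I : Type*} {N T : ℕ}
    (M : Fin N → I → ℝ)
    (hM : ∀ n i, M n i = 0 ∨ M n i = 1)
    (G : I → ℝ) (hG : G = ∑ n, M n)
    (φ : (Fin (T + 1) → ℝ) →ₗ[ℝ] ℝ)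
    (g : Fin (T + 1) → I → ℝ) :
    (∑ n, M n * (fun i => φ (fun j => (M n * g j) i)))
      = fun i => φ (fun j => (G * g j) i) := by
  funext i
  simp only [Finset.sum_apply, Pi.mul_apply, hG]
  -- `fun j => c * g j i` is `c • fun j => g j i` by definition of the scalar action on `Fin (T + 1) → ℝ`.
  exact φ.sum_mul_map_smul_of_isIdempotentElem _
    (fun n _ => isIdempotentElem_of_eq_zero_or_eq_one (hM n i)) _

/-- For binary masks `M 1, …, M N : I → ℝ` with spatial gradient scaling
`G = ∑ n, M n`, and an elementwise linear optimizer `f` given by a linear map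
`φ : ℝ^(T+1) → ℝ` acting coordinatewise, the sum of masked optimizer outputs on masked
gradient histories equals the optimizer output on the `G`-scaled gradient history. -/
theorem sgs_masked_optimizer_merge
    {I : Type*} [Fintype I] {N T : ℕ}
    (M : Fin N → I → ℝ)
    (hM : ∀ n i, M n i = 0 ∨ M n i = 1)
    (G : I → ℝ) (hG : G = ∑ n, M n)
    (φ : (Fin (T + 1) → ℝ) →ₗ[ℝ] ℝ)
    (g : Fin (T + 1) → I → ℝ) :
    (∑ n, M n * (fun i => φ (fun j => (M n * g j) i)))
      = fun i => φ (fun j => (G * g j) i) :=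
  sgs_masked_optimizer_merge_general M hM G hG φ g
end

section
/- Let I be a finite index set, M₁, …, M_N : I → ℝ binary masks (each Mₙ(i) ∈ {0,1}), and G = Σₙ Mₙ. Let f be an elementwise linear optimizer given by a linear map φ : ℝ^{T+1} → ℝ. For any branch weights W₁, …, W_N : I → ℝ, any gradient history g⁽⁰⁾, …, g⁽ᵀ⁾ : I → ℝ, and any learning rate λ ∈ ℝ, the merged result of one gradient-descent step on each branch equals one gradient-descent step on the merged weight with spatially scaled gradients: Σₙ Mₙ ⊙ (Wₙ − λ · f(Mₙ ⊙ g⁽ᵀ⁾, …, Mₙ ⊙ g⁽⁰⁾)) = (Σₙ Mₙ ⊙ Wₙ) − λ · f(G ⊙ g⁽ᵀ⁾, …, G ⊙ g⁽⁰⁾). -/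
/-!
Over any commutative ring, an elementwise linear optimizer commutes with pointwise
multiplication by a fixed function `m`, so `m ⊙ f(m ⊙ g) = m ⊙ m ⊙ f(g)`, which is `m ⊙ f(g)` when
`m` is idempotent, as a binary mask is. Summing over the branches therefore collects the masks
into `G ⊙ f(g) = f(G ⊙ g)`.
-/

open Finset

lemma isIdempotentElem_of_forall_eq_zero_or_eq_one {I M₀ : Type*} [MulZeroOneClass M₀]
    {m : I → M₀} (hm : ∀ i, m i = 0 ∨ m i = 1) :
    IsIdempotentElem m :=
  funext fun i => by rcases hm i with h | h <;> simp [h]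

section

variable {I J R : Type*} [CommRing R]

/-- The elementwise linear optimizer `f` given by `φ`, applied to a gradient history `g`. -/
def elementwiseMap (φ : (J → R) →ₗ[R] R) (g : J → I → R) : I → R :=
  fun i => φ (fun j => g j i)

lemma elementwiseMap_mul_left (φ : (J → R) →ₗ[R] R) (m : I → R) (g : J → I → R) :
    elementwiseMap φ (fun j => m * g j) = m * elementwiseMap φ g :=
  funext fun i => φ.map_smul (m i) (fun j => g j i)

lemma IsIdempotentElem.mul_elementwiseMap_mul_left {m : I → R} (hm : IsIdempotentElem m)
    (φ : (J → R) →ₗ[R] R) (g : J → I → R) :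
    m * elementwiseMap φ (fun j => m * g j) = m * elementwiseMap φ g := by
  rw [elementwiseMap_mul_left, ← mul_assoc, hm.eq]

lemma sum_mul_sub_smul_elementwiseMap {ι : Type*} (s : Finset ι) {M : ι → I → R}
    (hM : ∀ n ∈ s, IsIdempotentElem (M n)) (φ : (J → R) →ₗ[R] R) (W : ι → I → R)
    (g : J → I → R) (lam : R) :
    ∑ n ∈ s, M n * (W n - lam • elementwiseMap φ (fun j => M n * g j))
      = ∑ n ∈ s, M n * W n - lam • elementwiseMap φ (fun j => (∑ n ∈ s, M n) * g j) := by
  calc ∑ n ∈ s, M n * (W n - lam • elementwiseMap φ (fun j => M n * g j))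
      = ∑ n ∈ s, (M n * W n - lam • (M n * elementwiseMap φ g)) :=
        sum_congr rfl fun n hn => by
          rw [mul_sub, mul_smul_comm, (hM n hn).mul_elementwiseMap_mul_left]
    _ = ∑ n ∈ s, M n * W n - lam • ((∑ n ∈ s, M n) * elementwiseMap φ g) := by
        rw [sum_sub_distrib, ← smul_sum, sum_mul]
    _ = ∑ n ∈ s, M n * W n - lam • elementwiseMap φ (fun j => (∑ n ∈ s, M n) * g j) := by
        rw [elementwiseMap_mul_left]

end

theorem sgs_one_step_merge_general
    {I : Type*} {N T : ℕ}
    (M : Fin N → I → ℝ)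
    (hM : ∀ n i, M n i = 0 ∨ M n i = 1)
    (G : I → ℝ) (hG : G = ∑ n, M n)
    (φ : (Fin (T + 1) → ℝ) →ₗ[ℝ] ℝ)
    (W : Fin N → I → ℝ)
    (g : Fin (T + 1) → I → ℝ)
    (lam : ℝ) :
    (∑ n, M n * (W n - lam • (fun i => φ (fun j => (M n * g j) i))))
      = (∑ n, M n * W n) - lam • (fun i => φ (fun j => (G * g j) i)) := by
  subst hG
  exact sum_mul_sub_smul_elementwiseMap univ
    (fun n _ => isIdempotentElem_of_forall_eq_zero_or_eq_one (hM n)) φ W g lam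

/-- One step of gradient descent on each branch of an `N`-branch
reparameterization (with binary masks `M n`, branch weights `W n`, an elementwise linear
optimizer `f` given coordinatewise by a linear map `φ : ℝ^(T+1) → ℝ`, and learning rate `λ`),
merged via the masks, equals one step of gradient descent on the merged weight
`∑ n, M n ⊙ W n` with the gradient history scaled elementwise by `G = ∑ n, M n`. -/
theorem sgs_one_step_merge
    {I : Type*} [Fintype I] {N T : ℕ}
    (M : Fin N → I → ℝ)
    (hM : ∀ n i, M n i = 0 ∨ M n i = 1)
    (G : I → ℝ) (hG : G = ∑ n, M n)
    (φ : (Fin (T + 1) → ℝ) →ₗ[ℝ] ℝ)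
    (W : Fin N → I → ℝ)
    (g : Fin (T + 1) → I → ℝ)
    (lam : ℝ) :
    (∑ n, M n * (W n - lam • (fun i => φ (fun j => (M n * g j) i))))
      = (∑ n, M n * W n) - lam • (fun i => φ (fun j => (G * g j) i)) :=
  sgs_one_step_merge_general M hM G hG φ W g lam
end

section
/- Let I be a finite index set, ℓ : (I → ℝ) → ℝ a differentiable loss function on merged weights (with gradient ∇ℓ taken with respect to the standard Euclidean inner product on I → ℝ), M₁, …, M_N : I → ℝ binary masks (each Mₙ(i) ∈ {0,1}), and G = Σₙ Mₙ. Fix λ > 0 and initial branch weights Wₙ⁽⁰⁾. Define the reparameterized SGD trajectory Wₙ⁽ᵗ⁺¹⁾ = Wₙ⁽ᵗ⁾ − λ · Mₙ ⊙ ∇ℓ(Σₘ Mₘ ⊙ Wₘ⁽ᵗ⁾) for each branch n, and the spatially-gradient-scaled SGD trajectory Ŵ⁽⁰⁾ = Σₙ Mₙ ⊙ Wₙ⁽⁰⁾, Ŵ⁽ᵗ⁺¹⁾ = Ŵ⁽ᵗ⁾ − λ · G ⊙ ∇ℓ(Ŵ⁽ᵗ⁾). Then for all t ≥ 0, Σₙ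 Mₙ ⊙ Wₙ⁽ᵗ⁾ = Ŵ⁽ᵗ⁾. -/
/-!
Merging the branches is linear, and a binary mask is idempotent under pointwise
multiplication, so merging one reparameterized step gives
`∑ₙ Mₙ ⊙ (Wₙ - λ Mₙ ⊙ g) = ∑ₙ Mₙ ⊙ Wₙ - λ (∑ₙ Mₙ) ⊙ g = Ŵ - λ G ⊙ g`,
which is the spatially-gradient-scaled step from the merged weight. Both trajectories start
at the same point, so they agree by induction on `t`.
-/

/-- Pointwise (elementwise) multiplication `M ⊙ v` of a scaling `M : I → ℝ` with a vector of
the Euclidean space `I → ℝ`. -/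
noncomputable def emul {I : Type*} [Fintype I] (M : I → ℝ) (v : EuclideanSpace ℝ I) :
    EuclideanSpace ℝ I := WithLp.toLp 2 (fun i => M i * v i)

open Finset

section

variable {I : Type*} [Fintype I]

@[simp]
theorem emul_apply (M : I → ℝ) (v : EuclideanSpace ℝ I) (i : I) : emul M v i = M i * v i :=
  rfl

theorem emul_sub (M : I → ℝ) (u v : EuclideanSpace ℝ I) :
    emul M (u - v) = emul M u - emul M v := by
  ext i; simp [mul_sub]

theorem emul_smul (M : I → ℝ) (c : ℝ) (v : EuclideanSpace ℝ I) :
    emul M (c • v) = c • emul M v := by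
  ext i; simp [mul_left_comm]

theorem emul_emul (M M' : I → ℝ) (v : EuclideanSpace ℝ I) :
    emul M (emul M' v) = emul (M * M') v := by
  ext i; simp [mul_assoc]

theorem emul_emul_self {M : I → ℝ} (hM : IsIdempotentElem M) (v : EuclideanSpace ℝ I) :
    emul M (emul M v) = emul M v := by
  rw [emul_emul, hM.eq]

theorem sum_emul {ι : Type*} (s : Finset ι) (M : ι → I → ℝ) (v : EuclideanSpace ℝ I) :
    ∑ n ∈ s, emul (M n) v = emul (∑ n ∈ s, M n) v := by
  ext i; simp [Finset.sum_apply, sum_mul]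

theorem sum_emul_sub_smul_emul_self {ι : Type*} (s : Finset ι) {M : ι → I → ℝ}
    (hM : ∀ n, IsIdempotentElem (M n)) (W : ι → EuclideanSpace ℝ I) (c : ℝ)
    (g : EuclideanSpace ℝ I) :
    ∑ n ∈ s, emul (M n) (W n - c • emul (M n) g)
      = ∑ n ∈ s, emul (M n) (W n) - c • emul (∑ n ∈ s, M n) g := by
  simp only [emul_sub, emul_smul, emul_emul_self (hM _), sum_sub_distrib, ← smul_sum, sum_emul]

end

theorem sgs_sgd_trajectory_equivalence_general
    {I : Type*} [Fintype I] {N : ℕ}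
    (ℓ : EuclideanSpace ℝ I → ℝ)
    (M : Fin N → I → ℝ)
    (hM : ∀ n i, M n i = 0 ∨ M n i = 1)
    (G : I → ℝ) (hG : G = ∑ n, M n)
    (lam : ℝ)
    (Wb : Fin N → ℕ → EuclideanSpace ℝ I)
    (hWb : ∀ n t, Wb n (t + 1)
        = Wb n t - lam • emul (M n) (gradient ℓ (∑ m, emul (M m) (Wb m t))))
    (Wmerged : ℕ → EuclideanSpace ℝ I)
    (hW0 : Wmerged 0 = ∑ n, emul (M n) (Wb n 0))
    (hWstep : ∀ t, Wmerged (t + 1)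
        = Wmerged t - lam • emul G (gradient ℓ (Wmerged t))) :
    ∀ t, (∑ n, emul (M n) (Wb n t)) = Wmerged t := by
  have hidem : ∀ n, IsIdempotentElem (M n) := fun n =>
    funext fun i => (IsIdempotentElem.iff_eq_zero_or_one.mpr (hM n i)).eq
  intro t
  induction t with
  | zero => exact hW0.symm
  | succ t ih =>
    simp only [hWb, sum_emul_sub_smul_emul_self _ hidem, ih, hWstep, hG]

/-- For a differentiable loss `ℓ` on merged weights (Euclidean space
`I → ℝ`), binary masks `M n` with `G = ∑ n, M n`, learning rate `λ > 0`, the reparameterized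
SGD trajectory `Wb n (t+1) = Wb n t − λ • M n ⊙ ∇ℓ(∑ m, M m ⊙ Wb m t)` and the
spatially-gradient-scaled SGD trajectory `Ŵ 0 = ∑ n, M n ⊙ Wb n 0`,
`Ŵ (t+1) = Ŵ t − λ • G ⊙ ∇ℓ(Ŵ t)` satisfy `∑ n, M n ⊙ Wb n t = Ŵ t` for all `t`. -/
theorem sgs_sgd_trajectory_equivalence
    {I : Type*} [Fintype I] {N : ℕ}
    (ℓ : EuclideanSpace ℝ I → ℝ)
    (hdiff : Differentiable ℝ ℓ)
    (M : Fin N → I → ℝ)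
    (hM : ∀ n i, M n i = 0 ∨ M n i = 1)
    (G : I → ℝ) (hG : G = ∑ n, M n)
    (lam : ℝ) (hlam : 0 < lam)
    (Wb : Fin N → ℕ → EuclideanSpace ℝ I)
    (hWb : ∀ n t, Wb n (t + 1)
        = Wb n t - lam • emul (M n) (gradient ℓ (∑ m, emul (M m) (Wb m t))))
    (Wmerged : ℕ → EuclideanSpace ℝ I)
    (hW0 : Wmerged 0 = ∑ n, emul (M n) (Wb n 0))
    (hWstep : ∀ t, Wmerged (t + 1)
        = Wmerged t - lam • emul G (gradient ℓ (Wmerged t))) :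
    ∀ t, (∑ n, emul (M n) (Wb n t)) = Wmerged t :=
  sgs_sgd_trajectory_equivalence_general ℓ M hM G hG lam Wb hWb Wmerged hW0 hWstep
end

section
/- Let I be a finite index set, M₁, …, M_N : I → ℝ binary masks (each Mₙ(i) ∈ {0,1}), and G = Σₙ Mₙ. Consider gradient descent with weight decay coefficient δ ∈ ℝ, whose update function is f(g, W) = g + δ · W. Then for any branch weights W₁, …, W_N : I → ℝ with merged weight W = Σₙ Mₙ ⊙ Wₙ, any gradient g : I → ℝ, and any learning rate λ ∈ ℝ: Σₙ Mₙ ⊙ (Wₙ − λ · (Mₙ ⊙ g + δ · Wₙ)) = W − λ · (G ⊙ g + δ · W); that is, one step of weight-decayed gradient descent on all branches merges to one step of weight-decayed gradient descent on the merged weight with the gradient scaled elementwise by G. -/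
/-! Multiplying by a binary mask is idempotent, so masking the gradient a second time is
harmless: `m ⊙ (w - λ (m ⊙ g + δ w)) = m ⊙ w - λ (m ⊙ g + δ (m ⊙ w))`. The weight-decay step is
linear in the pair (gradient, weight), so summing these branch identities gives the step on the
merged weight with gradient `(∑ₙ Mₙ) ⊙ g`. -/

open Finset

section WeightDecayStep

variable {R A : Type*} [CommSemiring R] [Ring A] [Algebra R A]

def weightDecayStep (lam δ : R) (g w : A) : A :=
  w - lam • (g + δ • w)

theorem weightDecayStep_sum {ι : Type*} (s : Finset ι) (lam δ : R) (g w : ι → A) :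
    ∑ n ∈ s, weightDecayStep lam δ (g n) (w n) =
      weightDecayStep lam δ (∑ n ∈ s, g n) (∑ n ∈ s, w n) := by
  simp only [weightDecayStep, sum_sub_distrib, sum_add_distrib, ← smul_sum]

theorem IsIdempotentElem.mul_weightDecayStep {m : A} (hm : IsIdempotentElem m)
    (lam δ : R) (g w : A) :
    m * weightDecayStep lam δ (m * g) w = weightDecayStep lam δ (m * g) (m * w) := by
  rw [weightDecayStep, weightDecayStep, mul_sub, mul_smul_comm, mul_add, ← mul_assoc, hm.eq,
    mul_smul_comm]

theorem sum_mul_weightDecayStep_of_isIdempotentElem {ι : Type*} (s : Finset ι) {m : ι → A}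
    (hm : ∀ n, IsIdempotentElem (m n)) (lam δ : R) (g : A) (w : ι → A) :
    ∑ n ∈ s, m n * weightDecayStep lam δ (m n * g) (w n) =
      weightDecayStep lam δ ((∑ n ∈ s, m n) * g) (∑ n ∈ s, m n * w n) := by
  simp only [(hm _).mul_weightDecayStep, weightDecayStep_sum, sum_mul]

end WeightDecayStep

theorem sgs_weight_decay_one_step_general
    {I : Type*} {N : ℕ}
    (M : Fin N → I → ℝ)
    (hM : ∀ n i, M n i = 0 ∨ M n i = 1)
    (G : I → ℝ) (hG : G = ∑ n, M n)
    (δ : ℝ)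
    (W : Fin N → I → ℝ)
    (Wmerged : I → ℝ) (hW : Wmerged = ∑ n, M n * W n)
    (g : I → ℝ) (lam : ℝ) :
    (∑ n, M n * (W n - lam • (M n * g + δ • W n)))
      = Wmerged - lam • (G * g + δ • Wmerged) := by
  have hMidem : ∀ n, IsIdempotentElem (M n) := fun n =>
    funext fun i => (IsIdempotentElem.iff_eq_zero_or_one.mpr (hM n i)).eq
  subst hG hW
  exact sum_mul_weightDecayStep_of_isIdempotentElem univ hMidem lam δ g W

/-- For binary masks `M n` with `G = ∑ n, M n`, gradient descent with weight
decay `δ` (update function `f(g, W) = g + δ • W`): one step on every branch, merged via the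
masks, equals one step on the merged weight `W = ∑ n, M n ⊙ W n` with the gradient scaled
elementwise by `G`:
`∑ n, M n ⊙ (W n − λ • (M n ⊙ g + δ • W n)) = W − λ • (G ⊙ g + δ • W)`. -/
theorem sgs_weight_decay_one_step
    {I : Type*} [Fintype I] {N : ℕ}
    (M : Fin N → I → ℝ)
    (hM : ∀ n i, M n i = 0 ∨ M n i = 1)
    (G : I → ℝ) (hG : G = ∑ n, M n)
    (δ : ℝ)
    (W : Fin N → I → ℝ)
    (Wmerged : I → ℝ) (hW : Wmerged = ∑ n, M n * W n)
    (g : I → ℝ) (lam : ℝ) :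
    (∑ n, M n * (W n - lam • (M n * g + δ • W n)))
      = Wmerged - lam • (G * g + δ • Wmerged) :=
  sgs_weight_decay_one_step_general M hM G hG δ W Wmerged hW g lam
end

section
/- Let I be a finite index set, M₁, …, M_N : I → ℝ binary masks (each Mₙ(i) ∈ {0,1}), and G = Σₙ Mₙ. Fix a momentum coefficient β ∈ ℝ and an arbitrary gradient sequence g⁽⁰⁾, g⁽¹⁾, … : I → ℝ. Define branch momentum buffers vₙ⁽⁰⁾ = Mₙ ⊙ g⁽⁰⁾ and vₙ⁽ᵗ⁺¹⁾ = β · vₙ⁽ᵗ⁾ + Mₙ ⊙ g⁽ᵗ⁺¹⁾, and a merged momentum buffer v̂⁽⁰⁾ = G ⊙ g⁽⁰⁾ and v̂⁽ᵗ⁺¹⁾ = β · v̂⁽ᵗ⁾ + G ⊙ g⁽ᵗ⁺¹⁾. Then for all t ≥ 0, Σₙ Mₙ ⊙ vₙ⁽ᵗ⁾ = v̂⁽ᵗ⁾: the sum of masked branch momentum buffers equals the momentum buffer of the single merged convolution trained with gradients scaled elementwise by G. -/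
/-!
Multiplying a momentum buffer by a fixed element commutes with the recursion, and so does summing
buffers, since the update is linear in the incoming gradients. Hence `∑ n, M n * v n` is the
momentum buffer of the gradients `∑ n, M n * M n * g = G * g`, where the last step uses that a
binary mask is idempotent, `M n * M n = M n`.
-/

namespace Momentum

variable {R E F ι : Type*} [Semiring R] [AddCommMonoid E] [Module R E]

def buffer (β : R) (g : ℕ → E) : ℕ → E
  | 0 => g 0
  | t + 1 => β • buffer β g t + g (t + 1)

@[simp]
theorem buffer_succ (β : R) (g : ℕ → E) (t : ℕ) :
    buffer β g (t + 1) = β • buffer β g t + g (t + 1) := rfl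

theorem eq_buffer {β : R} {g v : ℕ → E} (h0 : v 0 = g 0)
    (hsucc : ∀ t, v (t + 1) = β • v t + g (t + 1)) : v = buffer β g := by
  funext t
  induction t with
  | zero => exact h0
  | succ t ih => rw [hsucc, ih, buffer_succ]

theorem map_buffer [AddCommMonoid F] [Module R F] (f : E →ₗ[R] F) (β : R) (g : ℕ → E) (t : ℕ) :
    f (buffer β g t) = buffer β (fun s => f (g s)) t := by
  induction t with
  | zero => rfl
  | succ t ih => rw [buffer_succ, buffer_succ, map_add, map_smul, ih]

theorem sum_buffer (s : Finset ι) (β : R) (g : ι → ℕ → E) (t : ℕ) :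
    ∑ n ∈ s, buffer β (g n) t = buffer β (fun u => ∑ n ∈ s, g n u) t := by
  induction t with
  | zero => rfl
  | succ t ih => simp only [buffer_succ, Finset.sum_add_distrib, ← Finset.smul_sum, ih]

end Momentum

open Momentum in
/-- For binary masks `M n` with `G = ∑ n, M n`, momentum coefficient `β`, and
any gradient sequence `g`, the branch momentum buffers `v n 0 = M n ⊙ g 0`,
`v n (t+1) = β • v n t + M n ⊙ g (t+1)` and the merged buffer `v̂ 0 = G ⊙ g 0`,
`v̂ (t+1) = β • v̂ t + G ⊙ g (t+1)` satisfy `∑ n, M n ⊙ v n t = v̂ t` for all `t`. -/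
theorem sgs_momentum_buffer_equivalence
    {I : Type*} [Fintype I] {N : ℕ}
    (M : Fin N → I → ℝ)
    (hM : ∀ n i, M n i = 0 ∨ M n i = 1)
    (G : I → ℝ) (hG : G = ∑ n, M n)
    (β : ℝ)
    (g : ℕ → I → ℝ)
    (v : Fin N → ℕ → I → ℝ)
    (hv0 : ∀ n, v n 0 = M n * g 0)
    (hv : ∀ n t, v n (t + 1) = β • v n t + M n * g (t + 1))
    (vhat : ℕ → I → ℝ)
    (hvhat0 : vhat 0 = G * g 0)
    (hvhat : ∀ t, vhat (t + 1) = β • vhat t + G * g (t + 1)) :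
    ∀ t, ∑ n, M n * v n t = vhat t := by
  intro t
  have hidem : ∀ n, M n * M n = M n := fun n =>
    funext fun i => IsIdempotentElem.iff_eq_zero_or_one.mpr (hM n i)
  have hbranch : ∀ n, M n * v n t = buffer β (fun s => M n * g s) t := fun n => by
    rw [eq_buffer (g := fun s => M n * g s) (hv0 n) (hv n)]
    simpa only [LinearMap.mulLeft_apply, ← mul_assoc, hidem] using
      map_buffer (LinearMap.mulLeft ℝ (M n)) β (fun s => M n * g s) t
  calc ∑ n, M n * v n t
      = buffer β (fun s => ∑ n, M n * g s) t := by simp only [hbranch, sum_buffer]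
    _ = buffer β (fun s => G * g s) t := by simp only [hG, Finset.sum_mul]
    _ = vhat t := by rw [eq_buffer (g := fun s => G * g s) hvhat0 hvhat]
end
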